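/- arXiv:1703.02332 — 5 statements merged into one kernel-verified Lean document; each statement's English description precedes it below -/
import Mathlib

section
/- Let n, m, p, k ∈ ℕ with p > n and p > m, and let s ≠ t be vertices of the n×m grid graph G_{n×m} that lie in the same connected component (which G_{n×m} is connected, so any two vertices). Then there exists a family of p s-t paths in G_{n×m} with at most k shared edges if and only if the graph distance between s and t is at most k. -/
/-- The `n × m` grid graph: vertices are pairs `(x, y)` of naturals with `x < n`
and `y < m`, and two vertices are adjacent iff they are at Manhattan distance 1. -/
def gridGraph (n m : ℕ) : SimpleGraph (ℕ × ℕ) where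
  Adj u v := u.1 < n ∧ u.2 < m ∧ v.1 < n ∧ v.2 < m ∧
    ((u.1 : ℤ) - v.1).natAbs + ((u.2 : ℤ) - v.2).natAbs = 1
  symm := by
    constructor
    rintro u v ⟨h1, h2, h3, h4, h5⟩
    exact ⟨h3, h4, h1, h2, by omega⟩
  loopless := by
    constructor
    rintro u ⟨-, -, -, -, h⟩
    omega

/-- The set of shared edges of a family of `s`-`t` walks (an edge is shared if it
occurs in two walks with distinct indices). -/
def sharedEdges {V : Type*} {G : SimpleGraph V} {s t : V} {p : ℕ}
    (P : Fin p → G.Walk s t) : Set (Sym2 V) :=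
  {e | ∃ i j, i ≠ j ∧ e ∈ (P i).edges ∧ e ∈ (P j).edges}

/-!
Every `s`-`t` walk crosses each column cut `{u | u.1 ≤ x}` with `x` between `s.1` and `t.1`,
and that cut has at most `m < p` edges, so by pigeonhole two of the `p` paths share one of them;
likewise for the row cuts, which have at most `n < p` edges. These cuts are pairwise disjoint,
so there are at least `|s.1 - t.1| + |s.2 - t.2| ≥ dist s t` shared edges. Conversely, `p` copies
of a shortest path share exactly its edges.
-/

namespace SimpleGraph

variable {V : Type*} {G : SimpleGraph V}

def cutEdges (G : SimpleGraph V) (S : Set V) : Set (Sym2 V) :=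
  {e | ∃ u ∈ S, ∃ v ∉ S, G.Adj u v ∧ s(u, v) = e}

lemma cutEdges_compl (S : Set V) : G.cutEdges Sᶜ = G.cutEdges S := by
  ext e
  constructor <;>
  · rintro ⟨u, hu, v, hv, huv, rfl⟩
    exact ⟨v, by simpa using hv, u, by simpa using hu, huv.symm, Sym2.eq_swap⟩

namespace Walk

lemma exists_mem_edges_cutEdges {a b : V} (w : G.Walk a b) {S : Set V} (ha : a ∈ S)
    (hb : b ∉ S) : ∃ e ∈ G.cutEdges S, e ∈ w.edges := by
  obtain ⟨d, hd, hfst, hsnd⟩ := w.exists_boundary_dart S ha hb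
  exact ⟨d.edge, ⟨d.fst, hfst, d.snd, hsnd, d.adj, rfl⟩, List.mem_map_of_mem hd⟩

lemma exists_mem_edges_cutEdges_of_separates {a b : V} (w : G.Walk a b) {S : Set V}
    (hS : a ∈ S ↔ b ∉ S) : ∃ e ∈ G.cutEdges S, e ∈ w.edges := by
  by_cases ha : a ∈ S
  · exact w.exists_mem_edges_cutEdges ha (hS.1 ha)
  · rw [← cutEdges_compl]
    exact w.exists_mem_edges_cutEdges ha (by simpa using not_not.1 (mt hS.2 ha))

end Walk

end SimpleGraph

section sharedEdges

variable {V : Type*} {G : SimpleGraph V} {s t : V} {p : ℕ}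

lemma sharedEdges_subset_iUnion (P : Fin p → G.Walk s t) :
    sharedEdges P ⊆ ⋃ i, {e | e ∈ (P i).edges} :=
  fun _ ⟨i, _, _, hi, _⟩ => Set.mem_iUnion.2 ⟨i, hi⟩

lemma sharedEdges_finite (P : Fin p → G.Walk s t) : (sharedEdges P).Finite :=
  (Set.finite_iUnion fun i => (P i).edges.finite_toSet).subset (sharedEdges_subset_iUnion P)

lemma ncard_sharedEdges_const_le (w : G.Walk s t) :
    (sharedEdges fun _ : Fin p => w).ncard ≤ w.length := by
  classical
  have hsub : sharedEdges (fun _ : Fin p => w) ⊆ ↑w.edges.toFinset :=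
    (sharedEdges_subset_iUnion _).trans (Set.iUnion_subset fun _ _ => List.mem_toFinset.2)
  calc (sharedEdges fun _ : Fin p => w).ncard ≤ w.edges.toFinset.card :=
        Set.ncard_coe_finset w.edges.toFinset ▸ Set.ncard_le_ncard hsub
    _ ≤ w.edges.length := List.toFinset_card_le _
    _ = w.length := w.length_edges

lemma exists_mem_sharedEdges_of_ncard_lt (P : Fin p → G.Walk s t) {E : Set (Sym2 V)}
    (hE : E.Finite) (hEp : E.ncard < p) (hP : ∀ i, ∃ e ∈ E, e ∈ (P i).edges) :
    ∃ e ∈ E, e ∈ sharedEdges P := by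
  choose f hfE hfP using hP
  obtain ⟨i, -, j, -, hij, hf⟩ := Set.exists_ne_map_eq_of_ncard_lt_of_maps_to
    (s := Set.univ) (by simpa using hEp) (fun i _ => hfE i) hE
  exact ⟨f i, hfE i, i, j, hij, hfP i, hf ▸ hfP j⟩

lemma sharedEdges_inter_cutEdges_nonempty (P : Fin p → G.Walk s t) {S : Set V}
    (hS : s ∈ S ↔ t ∉ S) (hfin : (G.cutEdges S).Finite) (hcard : (G.cutEdges S).ncard < p) :
    (sharedEdges P ∩ G.cutEdges S).Nonempty := by
  obtain ⟨e, he, hshared⟩ := exists_mem_sharedEdges_of_ncard_lt P hfin hcard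
    fun i => (P i).exists_mem_edges_cutEdges_of_separates hS
  exact ⟨e, hshared, he⟩

end sharedEdges

lemma Finset.card_le_ncard_of_pairwiseDisjoint {ι α : Type*} {I : Finset ι} {E : ι → Set α}
    {S : Set α} (hS : S.Finite) (hdisj : (I : Set ι).PairwiseDisjoint E)
    (hmeet : ∀ i ∈ I, (S ∩ E i).Nonempty) : I.card ≤ S.ncard := by
  rcases I.eq_empty_or_nonempty with rfl | ⟨i₀, hi₀⟩
  · simp
  have : Nonempty α := ⟨(hmeet i₀ hi₀).some⟩
  choose! f hf using hmeet
  rw [← Set.ncard_coe_finset]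
  refine Set.ncard_le_ncard_of_injOn f (fun i hi => (hf i hi).1) ?_ hS
  intro i hi j hj hij
  by_contra hne
  exact Set.disjoint_left.1 (hdisj hi hj hne) (hf i hi).2 (hij ▸ (hf j hj).2)

def manhattanDist (u v : ℕ × ℕ) : ℕ := ((u.1 : ℤ) - v.1).natAbs + ((u.2 : ℤ) - v.2).natAbs

namespace gridGraph

variable {n m : ℕ}

lemma exists_adj_manhattanDist_add_one {a b : ℕ × ℕ} (ha : a.1 < n ∧ a.2 < m)
    (hb : b.1 < n ∧ b.2 < m) (hab : a ≠ b) :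
    ∃ c, (gridGraph n m).Adj a c ∧ manhattanDist c b + 1 = manhattanDist a b := by
  obtain ⟨a₁, a₂⟩ := a
  obtain ⟨b₁, b₂⟩ := b
  simp only [gridGraph, manhattanDist, ne_eq, Prod.mk.injEq] at *
  rcases lt_trichotomy a₁ b₁ with h | rfl | h
  · exact ⟨(a₁ + 1, a₂), by simp; omega⟩
  · rcases lt_trichotomy a₂ b₂ with h | rfl | h
    · exact ⟨(a₁, a₂ + 1), by simp; omega⟩
    · simp at hab
    · exact ⟨(a₁, a₂ - 1), by simp; omega⟩
  · exact ⟨(a₁ - 1, a₂), by simp; omega⟩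

lemma exists_walk_length_eq_manhattanDist {a b : ℕ × ℕ} (ha : a.1 < n ∧ a.2 < m)
    (hb : b.1 < n ∧ b.2 < m) : ∃ w : (gridGraph n m).Walk a b, w.length = manhattanDist a b := by
  induction hd : manhattanDist a b generalizing a with
  | zero =>
    obtain rfl : a = b := by simp only [manhattanDist] at hd; ext <;> omega
    exact ⟨.nil, rfl⟩
  | succ d ih =>
    have hab : a ≠ b := by rintro rfl; simp [manhattanDist] at hd
    obtain ⟨c, hac, hc⟩ := exists_adj_manhattanDist_add_one ha hb hab
    obtain ⟨w, hw⟩ := ih ⟨hac.2.2.1, hac.2.2.2.1⟩ (by omega)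
    exact ⟨.cons hac w, by simp [hw]⟩

def halfPlane : ℕ ⊕ ℕ → Set (ℕ × ℕ)
  | .inl x => {u | u.1 ≤ x}
  | .inr y => {u | u.2 ≤ y}

lemma cutEdges_halfPlane_inl_subset (x : ℕ) : (gridGraph n m).cutEdges (halfPlane (.inl x)) ⊆
    (fun y => s((x, y), (x + 1, y))) '' Set.Iio m := by
  rintro _ ⟨⟨u₁, u₂⟩, hu, ⟨v₁, v₂⟩, hv, ⟨-, hu₂, -, -, huv⟩, rfl⟩
  simp only [halfPlane, Set.mem_ofPred_eq] at hu hv huv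
  obtain ⟨rfl, rfl, rfl⟩ : u₁ = x ∧ v₁ = x + 1 ∧ v₂ = u₂ := by omega
  exact ⟨_, hu₂, rfl⟩

lemma cutEdges_halfPlane_inr_subset (y : ℕ) : (gridGraph n m).cutEdges (halfPlane (.inr y)) ⊆
    (fun x => s((x, y), (x, y + 1))) '' Set.Iio n := by
  rintro _ ⟨⟨u₁, u₂⟩, hu, ⟨v₁, v₂⟩, hv, ⟨hu₁, -, -, -, huv⟩, rfl⟩
  simp only [halfPlane, Set.mem_ofPred_eq] at hu hv huv
  obtain ⟨rfl, rfl, rfl⟩ : u₂ = y ∧ v₂ = y + 1 ∧ v₁ = u₁ := by omega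
  exact ⟨_, hu₁, rfl⟩

lemma cutEdges_halfPlane_finite (i : ℕ ⊕ ℕ) : ((gridGraph n m).cutEdges (halfPlane i)).Finite := by
  cases i with
  | inl x => exact ((Set.finite_Iio m).image _).subset (cutEdges_halfPlane_inl_subset x)
  | inr y => exact ((Set.finite_Iio n).image _).subset (cutEdges_halfPlane_inr_subset y)

lemma ncard_cutEdges_halfPlane_lt {p : ℕ} (hn : n < p) (hm : m < p) (i : ℕ ⊕ ℕ) :
    ((gridGraph n m).cutEdges (halfPlane i)).ncard < p := by
  cases i with
  | inl x =>
    calc _ ≤ ((fun y => s((x, y), (x + 1, y))) '' Set.Iio m).ncard :=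
          Set.ncard_le_ncard (cutEdges_halfPlane_inl_subset x) ((Set.finite_Iio m).image _)
      _ ≤ m := (Set.ncard_image_le (Set.finite_Iio m)).trans_eq (Set.ncard_Iio_nat m)
      _ < p := hm
  | inr y =>
    calc _ ≤ ((fun x => s((x, y), (x, y + 1))) '' Set.Iio n).ncard :=
          Set.ncard_le_ncard (cutEdges_halfPlane_inr_subset y) ((Set.finite_Iio n).image _)
      _ ≤ n := (Set.ncard_image_le (Set.finite_Iio n)).trans_eq (Set.ncard_Iio_nat n)
      _ < p := hn

lemma pairwise_disjoint_cutEdges_halfPlane :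
    Pairwise fun i j => Disjoint ((gridGraph n m).cutEdges (halfPlane i))
      ((gridGraph n m).cutEdges (halfPlane j)) := by
  rintro (x | y) (x' | y') hne <;> refine Set.disjoint_left.2 fun e he he' => ?_
  all_goals
    first
    | obtain ⟨a, -, rfl⟩ := cutEdges_halfPlane_inl_subset x he
    | obtain ⟨a, -, rfl⟩ := cutEdges_halfPlane_inr_subset y he
  all_goals
    first
    | obtain ⟨b, -, hb⟩ := cutEdges_halfPlane_inl_subset x' he'
    | obtain ⟨b, -, hb⟩ := cutEdges_halfPlane_inr_subset y' he'
  all_goals simp only [Sym2.eq_iff, Prod.mk.injEq, ne_eq, Sum.inl.injEq, Sum.inr.injEq] at hb hne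
  all_goals omega

lemma manhattanDist_le_ncard_sharedEdges {p : ℕ} (hn : n < p) (hm : m < p) {s t : ℕ × ℕ}
    (P : Fin p → (gridGraph n m).Walk s t) : manhattanDist s t ≤ (sharedEdges P).ncard := by
  let I := (Finset.Ico (min s.1 t.1) (max s.1 t.1)).disjSum
    (Finset.Ico (min s.2 t.2) (max s.2 t.2))
  have hI : I.card = manhattanDist s t := by
    simp only [I, Finset.card_disjSum, Nat.card_Ico, manhattanDist]
    omega
  rw [← hI]
  refine Finset.card_le_ncard_of_pairwiseDisjoint
    (E := fun i => (gridGraph n m).cutEdges (halfPlane i)) (sharedEdges_finite P)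
    (pairwise_disjoint_cutEdges_halfPlane.set_pairwise _) fun i hi => ?_
  refine sharedEdges_inter_cutEdges_nonempty P ?_ (cutEdges_halfPlane_finite i)
    (ncard_cutEdges_halfPlane_lt hn hm i)
  cases i <;>
    simp only [I, Finset.inl_mem_disjSum, Finset.inr_mem_disjSum, Finset.mem_Ico, halfPlane,
      Set.mem_ofPred_eq, not_le] at hi ⊢ <;>
    omega

end gridGraph

open gridGraph in
theorem stmt3_general (n m p k : ℕ) (hn : n < p) (hm : m < p)
    (s t : ℕ × ℕ)
    (hs : s.1 < n ∧ s.2 < m) (ht : t.1 < n ∧ t.2 < m) :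
    (∃ P : Fin p → (gridGraph n m).Walk s t,
      (∀ i, (P i).IsPath) ∧ (sharedEdges P).ncard ≤ k) ↔
    (gridGraph n m).dist s t ≤ k := by
  obtain ⟨w, hw⟩ := exists_walk_length_eq_manhattanDist hs ht
  constructor
  · rintro ⟨P, -, hk⟩
    calc (gridGraph n m).dist s t ≤ w.length := SimpleGraph.dist_le w
      _ = manhattanDist s t := hw
      _ ≤ (sharedEdges P).ncard := manhattanDist_le_ncard_sharedEdges hn hm P
      _ ≤ k := hk
  · intro hk
    obtain ⟨q, hq, hqd⟩ := w.reachable.exists_path_of_dist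
    exact ⟨fun _ => q, fun _ => hq, (ncard_sharedEdges_const_le q).trans (hqd ▸ hk)⟩

/-- On a `p`-small grid (`p > n` and `p > m`), there is a family of `p` `s`-`t`
paths with at most `k` shared edges iff the distance from `s` to `t` is at most `k`. -/
theorem stmt3 (n m p k : ℕ) (hn : n < p) (hm : m < p)
    (s t : ℕ × ℕ) (hst : s ≠ t)
    (hs : s.1 < n ∧ s.2 < m) (ht : t.1 < n ∧ t.2 < m) :
    (∃ P : Fin p → (gridGraph n m).Walk s t,
      (∀ i, (P i).IsPath) ∧ (sharedEdges P).ncard ≤ k) ↔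
    (gridGraph n m).dist s t ≤ k :=
  stmt3_general n m p k hn hm s t hs ht
end

section
/- Let G be a simple graph whose maximum degree is at most Δ with Δ ≥ 2, let s ≠ t be vertices of G, and let P_1, …, P_p be a family of s-t paths in G with shared edge set F. If s and t lie in different connected components of the spanning subgraph of G with edge set F (in particular, if F contains no s-t path), then p ≤ deg(s) + (Δ − 2)·|F|. -/
/-- The degree of a vertex, as the number of its neighbours. -/
noncomputable def degOf {V : Type*} (G : SimpleGraph V) (v : V) : ℕ :=
  (G.neighborSet v).ncard

private lemma parentEdge {V : Type*} (H : SimpleGraph V) {s u : V}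
    (hu : H.Reachable s u) (hus : u ≠ s) :
    ∃ pu, H.Adj u pu ∧ H.Reachable s pu ∧ H.dist s pu + 1 = H.dist s u := by
  obtain ⟨w, hw⟩ := hu.exists_walk_length_eq_dist
  cases hwr : w.reverse with
  | nil => exact absurd rfl hus.symm
  | @cons _ b _ hadj q =>
    have hlen : q.length + 1 = H.dist s u := by
      have := congrArg SimpleGraph.Walk.length hwr
      simpa [hw] using this.symm
    have hrb : H.Reachable s b := ⟨q.reverse⟩
    refine ⟨b, hadj, hrb, ?_⟩
    have h1 : H.dist s b ≤ q.length := by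
      simpa using H.dist_le q.reverse
    have h2 : H.dist s u ≤ H.dist s b + 1 := by
      obtain ⟨w2, hw2⟩ := hrb.exists_walk_length_eq_dist
      have := H.dist_le (w2.concat hadj.symm)
      simpa [SimpleGraph.Walk.length_concat, hw2] using this
    omega

private lemma firstEdge {V : Type*} {G : SimpleGraph V} (s : V) (F : Set (Sym2 V)) :
    ∀ {a b : V} (w : G.Walk a b), (SimpleGraph.fromEdgeSet F).Reachable s a →
      (SimpleGraph.fromEdgeSet F).Reachable s b ∨
      ∃ u v, G.Adj u v ∧ s(u, v) ∈ w.edges ∧ s(u, v) ∉ F ∧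
        (SimpleGraph.fromEdgeSet F).Reachable s u := by
  intro a b w
  induction w with
  | nil => exact fun h => Or.inl h
  | @cons a c _ hadj w ih =>
    intro hra
    by_cases he : s(a, c) ∈ F
    · have hH : (SimpleGraph.fromEdgeSet F).Adj a c :=
        (SimpleGraph.fromEdgeSet_adj F).mpr ⟨he, hadj.ne⟩
      rcases ih (hra.trans hH.reachable) with h | ⟨u, v, h1, h2, h3, h4⟩
      · exact Or.inl h
      · exact Or.inr ⟨u, v, h1, by simp [h2], h3, h4⟩
    · exact Or.inr ⟨a, c, hadj, by simp, he, hra⟩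

/-- If the maximum degree of `G` is at most `Δ ≥ 2` and the shared edge set `F`
of a family of `p` `s`-`t` paths does not connect `s` to `t`, then
`p ≤ deg s + (Δ - 2) * |F|`. -/
theorem stmt7 {V : Type*} (G : SimpleGraph V) (Δ : ℕ) (hΔ : 2 ≤ Δ)
    (hfin : ∀ v, (G.neighborSet v).Finite) (hmax : ∀ v, degOf G v ≤ Δ)
    (s t : V) (hst : s ≠ t)
    (p : ℕ) (P : Fin p → G.Walk s t) (hP : ∀ i, (P i).IsPath)
    (hsep : ¬ (SimpleGraph.fromEdgeSet (sharedEdges P)).Reachable s t) :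
    p ≤ degOf G s + (Δ - 2) * (sharedEdges P).ncard := by
  classical
  set F : Set (Sym2 V) := sharedEdges P with hF
  set H := SimpleGraph.fromEdgeSet F with hH
  have hFG : F ⊆ G.edgeSet := by
    rintro e ⟨i, j, hij, hi, hj⟩
    exact (P i).edges_subset_edgeSet hi
  have hFfin : F.Finite := by
    refine Set.Finite.subset (Set.finite_iUnion fun i : Fin p => (P i).edges.finite_toSet) ?_
    rintro e ⟨i, j, hij, hi, _⟩
    exact Set.mem_iUnion.mpr ⟨i, hi⟩
  have sym2fin : ∀ e : Sym2 V, {x | x ∈ e}.Finite := by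
    intro e
    induction e using Sym2.ind with
    | _ a b =>
      have : {x | x ∈ s(a, b)} = {a, b} := by ext x; simp [Sym2.mem_iff]
      rw [this]; exact (Set.finite_singleton b).insert a
  set C : Set V := {v | H.Reachable s v} with hC
  have hCfin : C.Finite := by
    refine Set.Finite.subset (((Set.finite_singleton s).union
      (Set.Finite.biUnion hFfin fun e _ => sym2fin e))) ?_
    intro v hv
    by_cases hvs : v = s
    · exact Or.inl (by simp [hvs])
    · obtain ⟨pv, hadj, _, _⟩ := parentEdge H hv hvs
      have he : s(v, pv) ∈ F := ((SimpleGraph.fromEdgeSet_adj F).mp hadj).1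
      exact Or.inr (Set.mem_biUnion he (by simp))
  set Ff := hFfin.toFinset with hFf
  set Cf := hCfin.toFinset with hCf
  have hsC : s ∈ Cf := hCfin.mem_toFinset.mpr (SimpleGraph.Reachable.refl s)
  set nbr : V → Finset V := fun u => (hfin u).toFinset with hnbr
  have hdeg : ∀ u, (nbr u).card = degOf G u := fun u =>
    ((Set.ncard_eq_toFinset_card _ (hfin u)).symm)
  set good : V → Finset V := fun u => (nbr u).filter (fun v => s(u, v) ∉ F) with hgood
  set T : Finset (V × V) := Cf.biUnion (fun u => (good u).image (fun v => (u, v))) with hT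
  -- injection from paths into T
  have hchoice : ∀ i : Fin p, ∃ uv : V × V, G.Adj uv.1 uv.2 ∧
      s(uv.1, uv.2) ∈ (P i).edges ∧ s(uv.1, uv.2) ∉ F ∧ H.Reachable s uv.1 := by
    intro i
    rcases firstEdge s F (P i) (SimpleGraph.Reachable.refl s) with h | ⟨u, v, h1, h2, h3, h4⟩
    · exact absurd h hsep
    · exact ⟨(u, v), h1, h2, h3, h4⟩
  choose f hf1 hf2 hf3 hf4 using hchoice
  have hpT : p ≤ T.card := by
    have hmaps : ∀ i ∈ (Finset.univ : Finset (Fin p)), f i ∈ T := by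
      intro i _
      refine Finset.mem_biUnion.mpr ⟨(f i).1, hCfin.mem_toFinset.mpr (hf4 i), ?_⟩
      refine Finset.mem_image.mpr ⟨(f i).2, ?_, rfl⟩
      exact Finset.mem_filter.mpr ⟨(hfin _).mem_toFinset.mpr (hf1 i), hf3 i⟩
    have hinj : Set.InjOn f (Finset.univ : Finset (Fin p)) := by
      intro i _ j _ hij
      by_contra hne
      exact hf3 i ⟨i, j, hne, hf2 i, by rw [show s((f i).1, (f i).2) = s((f j).1, (f j).2) by rw [hij]]; exact hf2 j⟩
    simpa using Finset.card_le_card_of_injOn f hmaps hinj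
  -- card of T as a sum
  have hTcard : T.card = ∑ u ∈ Cf, (good u).card := by
    rw [hT, Finset.card_biUnion]
    · exact Finset.sum_congr rfl fun u _ =>
        Finset.card_image_of_injective _ (fun a b h => (Prod.mk.injEq _ _ _ _ ▸ h).2)
    · intro x _ y _ hxy
      simp only [Finset.disjoint_left, Finset.mem_image]
      rintro a ⟨v, _, rfl⟩ ⟨v', _, h⟩
      exact hxy (congrArg Prod.fst h).symm
  set degF : V → ℕ := fun u => (Ff.filter (fun e => u ∈ e)).card with hdegF
  have hsplit : ∀ u ∈ Cf, (good u).card + degF u = (nbr u).card := by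
    intro u _
    have h2 : ((nbr u).filter (fun v => s(u, v) ∈ F)).card = degF u := by
      refine Finset.card_bij (fun v _ => s(u, v)) ?_ ?_ ?_
      · intro v hv
        obtain ⟨_, hvF⟩ := Finset.mem_filter.mp hv
        exact Finset.mem_filter.mpr ⟨hFfin.mem_toFinset.mpr hvF, by simp⟩
      · intro v1 h1 v2 h2 h
        exact Sym2.congr_right.mp h
      · intro e he
        obtain ⟨heF, hue⟩ := Finset.mem_filter.mp he
        have heF' : e ∈ F := hFfin.mem_toFinset.mp heF
        refine ⟨Sym2.Mem.other hue, ?_, Sym2.other_spec hue⟩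
        have hG : G.Adj u (Sym2.Mem.other hue) := by
          have := hFG heF'
          rw [← Sym2.other_spec hue] at this
          exact this
        refine Finset.mem_filter.mpr ⟨(hfin u).mem_toFinset.mpr hG, ?_⟩
        rw [Sym2.other_spec hue]; exact heF'
    have h3 := Finset.card_filter_add_card_filter_not
      (s := nbr u) (p := fun v => s(u, v) ∈ F)
    have h4 : ((nbr u).filter fun v => ¬ s(u, v) ∈ F) = good u := by
      apply Finset.filter_congr_decidable
    rw [h2, h4] at h3
    omega
  have hsum1 : (∑ u ∈ Cf, (good u).card) + (∑ u ∈ Cf, degF u) = ∑ u ∈ Cf, (nbr u).card := by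
    rw [← Finset.sum_add_distrib]
    exact Finset.sum_congr rfl hsplit
  have hsum2 : ∑ u ∈ Cf, (nbr u).card ≤ degOf G s + Δ * (Cf.erase s).card := by
    rw [← Finset.add_sum_erase _ _ hsC, hdeg s]
    refine add_le_add le_rfl ?_
    calc ∑ u ∈ Cf.erase s, (nbr u).card ≤ ∑ u ∈ Cf.erase s, Δ :=
          Finset.sum_le_sum fun u _ => (hdeg u) ▸ hmax u
      _ = Δ * (Cf.erase s).card := by rw [Finset.sum_const, smul_eq_mul, mul_comm]
  have hswap : ∑ u ∈ Cf, degF u = ∑ e ∈ Ff, (Cf.filter (fun u => u ∈ e)).card := by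
    simp_rw [hdegF, Finset.card_filter]
    exact Finset.sum_comm
  set K := Ff.filter (fun e => 2 ≤ (Cf.filter (fun u => u ∈ e)).card) with hK
  have hK1 : 2 * K.card ≤ ∑ e ∈ Ff, (Cf.filter (fun u => u ∈ e)).card := by
    calc 2 * K.card = ∑ _e ∈ K, 2 := by rw [Finset.sum_const, smul_eq_mul, mul_comm]
      _ ≤ ∑ e ∈ K, (Cf.filter (fun u => u ∈ e)).card :=
          Finset.sum_le_sum fun e he => (Finset.mem_filter.mp he).2
      _ ≤ ∑ e ∈ Ff, (Cf.filter (fun u => u ∈ e)).card :=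
          Finset.sum_le_sum_of_subset (Finset.filter_subset _ _)
  have hpar : ∀ u ∈ Cf.erase s, ∃ pu, H.Adj u pu ∧ H.Reachable s pu ∧
      H.dist s pu + 1 = H.dist s u := by
    intro u hu
    obtain ⟨hus, huC⟩ := Finset.mem_erase.mp hu
    exact parentEdge H (hCfin.mem_toFinset.mp huC) hus
  choose! g hg1 hg2 hg3 using hpar
  have hn : (Cf.erase s).card ≤ K.card := by
    refine Finset.card_le_card_of_injOn (fun u => s(u, g u)) ?_ ?_
    · intro u hu
      have hadj := hg1 u hu
      have heF : s(u, g u) ∈ F := ((SimpleGraph.fromEdgeSet_adj F).mp hadj).1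
      refine Finset.mem_filter.mpr ⟨hFfin.mem_toFinset.mpr heF, ?_⟩
      have hsub : ({u, g u} : Finset V) ⊆ Cf.filter (fun x => x ∈ s(u, g u)) := by
        intro x hx
        rcases Finset.mem_insert.mp hx with rfl | hx
        · exact Finset.mem_filter.mpr ⟨(Finset.mem_erase.mp hu).2, by simp⟩
        · rw [Finset.mem_singleton.mp hx]
          exact Finset.mem_filter.mpr ⟨hCfin.mem_toFinset.mpr (hg2 u hu), by simp⟩
      calc 2 = ({u, g u} : Finset V).card := (Finset.card_pair hadj.ne).symm
        _ ≤ _ := Finset.card_le_card hsub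
    · intro u1 h1 u2 h2 heq
      rcases Sym2.eq_iff.mp heq with ⟨h, _⟩ | ⟨ha, hb⟩
      · exact h
      · have d1 := hg3 u1 h1
        have d2 := hg3 u2 h2
        rw [← ha] at d2
        rw [hb] at d1
        omega
  have hKF : K.card ≤ Ff.card := Finset.card_le_card (Finset.filter_subset _ _)
  have hFcard : F.ncard = Ff.card := Set.ncard_eq_toFinset_card _ hFfin
  -- final arithmetic
  have h8 : Δ * (Cf.erase s).card ≤ Δ * K.card := Nat.mul_le_mul_left Δ hn
  have h9 : (Δ - 2) * K.card ≤ (Δ - 2) * Ff.card := Nat.mul_le_mul_left _ hKF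
  have h10 : (Δ - 2) * K.card + 2 * K.card = Δ * K.card := by
    rw [← add_mul, Nat.sub_add_cancel hΔ]
  rw [hFcard]
  omega
end

section
/- Let G be a simple graph with maximum degree at most 4, let s ≠ t be vertices of G, and let P_1, …, P_p be a family of s-t paths in G with shared edge set F. If s and t lie in different connected components of the spanning subgraph of G with edge set F, then |F| ≥ ⌈(p − deg(s))/2⌉ + ⌈(p − deg(t))/2⌉, where ⌈(p − d)/2⌉ is taken to be 0 whenever p ≤ d. -/
/-- `⌈(p - d)/2⌉`, taken to be `0` whenever `p ≤ d`. -/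
def ceilHalfSub (p d : ℕ) : ℕ := (p - d + 1) / 2

/-!
Let `H` be the graph of shared edges and `C` the component of `s` in `H`, which misses `t`.
Each `P i` leaves `C` along some dart, and these `p` darts are pairwise distinct: a dart used by
two walks is a shared edge, and shared edges never leave `C`. At a vertex `u` of `C` the exit
darts and the `H`-edges go to distinct neighbours, hence
`p + 2 |E(C)| ≤ ∑_{u ∈ C} deg u ≤ deg s + 4 (|C| - 1) ≤ deg s + 4 |E(C)|`, the last step because
`C` is connected. So `p ≤ deg s + 2 |E(C)|`; likewise for `t`, and the edge sets of the two
components are disjoint subsets of the shared edges.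
-/

namespace SimpleGraph

variable {V : Type*} {G H : SimpleGraph V}

lemma finite_support_of_finite_edgeSet (h : H.edgeSet.Finite) : H.support.Finite := by
  classical
  refine (h.biUnion fun e _ => e.toFinset.finite_toSet).subset fun v hv => ?_
  obtain ⟨w, hvw⟩ := H.mem_support.1 hv
  exact Set.mem_biUnion (x := s(v, w)) hvw (Sym2.mem_toFinset.2 (Sym2.mem_mk_left v w))

lemma card_le_sum_ncard_neighborSet_sdiff {ι : Type*} [Fintype ι] (K : Set V) [Fintype K]
    (hfin : ∀ v, (G.neighborSet v).Finite) (d : ι → G.Dart) (hd : Function.Injective d)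
    (hfst : ∀ i, (d i).fst ∈ K) (hsnd : ∀ i, (d i).snd ∉ K) :
    Fintype.card ι ≤ ∑ u : K, (G.neighborSet u \ K).ncard := by
  classical
  let f : ι → K := fun i => ⟨(d i).fst, hfst i⟩
  rw [← Finset.card_univ, Finset.card_eq_sum_card_fiberwise (f := f) (t := Finset.univ)
    (fun _ _ => Finset.mem_univ _)]
  refine Finset.sum_le_sum fun u _ => ?_
  rw [← Set.ncard_coe_finset]
  refine Set.ncard_le_ncard_of_injOn (fun i => (d i).snd) ?_ ?_ (hfin u).sdiff
  · intro i hi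
    simp only [Finset.coe_filter, Finset.mem_univ, true_and, Set.mem_ofPred_eq] at hi
    refine ⟨?_, hsnd i⟩
    rw [← hi]
    exact (d i).adj
  · intro i hi j hj hij
    simp only [Finset.coe_filter, Finset.mem_univ, true_and, Set.mem_ofPred_eq] at hi hj
    exact hd ((Dart.ext_iff _ _).2 (Prod.ext (congrArg Subtype.val (hi.trans hj.symm)) hij))

namespace ConnectedComponent

variable (C : H.ConnectedComponent)

lemma supp_subset_insert_support {v : V} (hv : v ∈ C.supp) : C.supp ⊆ insert v H.support := by
  intro u hu
  by_cases huv : u = v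
  · exact Or.inl huv
  · exact Or.inr (mem_support_of_reachable huv (ConnectedComponent.exact (hu.trans hv.symm)))

lemma finite_supp (h : H.edgeSet.Finite) : C.supp.Finite :=
  have ⟨v, hv⟩ := C.nonempty_supp
  ((finite_support_of_finite_edgeSet h).insert v).subset (C.supp_subset_insert_support hv)

lemma natCard_edgeSet_toSimpleGraph :
    Nat.card C.toSimpleGraph.edgeSet = C.toSubgraph.edgeSet.ncard := by
  rw [← C.toSubgraph.image_coe_edgeSet_coe, coe_toSubgraph,
    Set.ncard_image_of_injective _ (Sym2.map.injective Subtype.val_injective)]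
  exact Nat.card_coe_set_eq _

lemma disjoint_edgeSet_toSubgraph {C' : H.ConnectedComponent} (hne : C ≠ C') :
    Disjoint C.toSubgraph.edgeSet C'.toSubgraph.edgeSet := by
  rw [Set.disjoint_left]
  intro e he he'
  induction e using Sym2.ind with
  | _ a b =>
    simp only [Subgraph.mem_edgeSet, Subgraph.induce_adj] at he he'
    exact hne (he.1.symm.trans he'.1)

lemma ncard_edgeSet_toSubgraph_add_le {C' : H.ConnectedComponent} (hne : C ≠ C')
    (h : H.edgeSet.Finite) :
    C.toSubgraph.edgeSet.ncard + C'.toSubgraph.edgeSet.ncard ≤ H.edgeSet.ncard := by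
  rw [← Set.ncard_union_eq (C.disjoint_edgeSet_toSubgraph hne)
    (h.subset (Subgraph.edgeSet_subset _)) (h.subset (Subgraph.edgeSet_subset _))]
  exact Set.ncard_le_ncard
    (Set.union_subset (Subgraph.edgeSet_subset _) (Subgraph.edgeSet_subset _)) h

lemma degOf_toSimpleGraph (u : C.supp) : degOf C.toSimpleGraph u = degOf H u := by
  have himage : Subtype.val '' C.toSimpleGraph.neighborSet u = H.neighborSet u := by
    ext v
    constructor
    · rintro ⟨w, hw, rfl⟩
      exact (C.toSimpleGraph_adj u.2 w.2).1 hw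
    · intro hv
      have hvC : v ∈ C.supp := (connectedComponentMk_eq_of_adj hv).symm.trans u.2
      exact ⟨⟨v, hvC⟩, (C.toSimpleGraph_adj u.2 hvC).2 hv, rfl⟩
  rw [degOf, degOf, ← himage, Set.ncard_image_of_injective _ Subtype.val_injective]

lemma sum_degOf_eq_two_mul [Fintype C.supp] :
    ∑ u : C.supp, degOf H u = 2 * C.toSubgraph.edgeSet.ncard := by
  classical
  rw [← natCard_edgeSet_toSimpleGraph, Nat.card_eq_fintype_card, card_edgeSet,
    ← sum_degrees_eq_twice_card_edges]
  refine Finset.sum_congr rfl fun u _ => ?_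
  rw [← degOf_toSimpleGraph, degOf, ← Nat.card_coe_set_eq, Nat.card_eq_fintype_card,
    card_neighborSet_eq_degree]

lemma ncard_neighborSet_sdiff_add_degOf_le (hHG : H ≤ G) {u : V}
    (hfin : (G.neighborSet u).Finite) (hu : u ∈ C.supp) :
    (G.neighborSet u \ C.supp).ncard + degOf H u ≤ degOf G u := by
  have hH : H.neighborSet u ⊆ G.neighborSet u ∩ C.supp := fun v hv =>
    ⟨hHG hv, (connectedComponentMk_eq_of_adj hv).symm.trans hu⟩
  have := Set.ncard_inter_add_ncard_sdiff_eq_ncard (G.neighborSet u) C.supp hfin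
  have := Set.ncard_le_ncard hH (hfin.subset Set.inter_subset_left)
  rw [degOf, degOf]
  omega

lemma sum_degOf_le [Fintype C.supp] {k : ℕ} (hmax : ∀ v, degOf G v ≤ k) {s : V}
    (hs : s ∈ C.supp) :
    ∑ u : C.supp, degOf G u ≤ degOf G s + k * C.toSubgraph.edgeSet.ncard := by
  classical
  have hcard : Fintype.card C.supp ≤ C.toSubgraph.edgeSet.ncard + 1 := by
    rw [← Nat.card_eq_fintype_card, ← natCard_edgeSet_toSimpleGraph]
    exact C.connected_toSimpleGraph.card_vert_le_card_edgeSet_add_one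
  let s' : C.supp := ⟨s, hs⟩
  calc ∑ u : C.supp, degOf G u
      = degOf G s + ∑ u ∈ Finset.univ.erase s', degOf G u :=
        (Finset.add_sum_erase _ (fun u : C.supp => degOf G u) (Finset.mem_univ s')).symm
    _ ≤ degOf G s + (Finset.univ.erase s').card • k := by
        gcongr
        exact Finset.sum_le_card_nsmul _ _ _ fun u _ => hmax u
    _ ≤ degOf G s + k * C.toSubgraph.edgeSet.ncard := by
        rw [Finset.card_erase_of_mem (Finset.mem_univ _), Finset.card_univ, smul_eq_mul,
          mul_comm]
        gcongr
        omega

lemma card_add_two_mul_ncard_edgeSet_le {ι : Type*} [Fintype ι] [Fintype C.supp] (hHG : H ≤ G)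
    (hfin : ∀ v, (G.neighborSet v).Finite) {k : ℕ} (hmax : ∀ v, degOf G v ≤ k) {s : V}
    (hs : s ∈ C.supp) (d : ι → G.Dart) (hd : Function.Injective d)
    (hfst : ∀ i, (d i).fst ∈ C.supp) (hsnd : ∀ i, (d i).snd ∉ C.supp) :
    Fintype.card ι + 2 * C.toSubgraph.edgeSet.ncard
      ≤ degOf G s + k * C.toSubgraph.edgeSet.ncard :=
  calc Fintype.card ι + 2 * C.toSubgraph.edgeSet.ncard
      ≤ ∑ u : C.supp, (G.neighborSet u \ C.supp).ncard + ∑ u : C.supp, degOf H u := by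
        rw [C.sum_degOf_eq_two_mul]
        gcongr
        exact card_le_sum_ncard_neighborSet_sdiff C.supp hfin d hd hfst hsnd
    _ ≤ ∑ u : C.supp, degOf G u := by
        rw [← Finset.sum_add_distrib]
        exact Finset.sum_le_sum fun u _ =>
          C.ncard_neighborSet_sdiff_add_degOf_le hHG (hfin u) u.2
    _ ≤ degOf G s + k * C.toSubgraph.edgeSet.ncard := C.sum_degOf_le hmax hs

end ConnectedComponent

end SimpleGraph

open SimpleGraph

section sharedEdges

variable {V : Type*} {G : SimpleGraph V} {s t : V} {p : ℕ} (P : Fin p → G.Walk s t)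

lemma sharedEdges_reverse : sharedEdges (fun i => (P i).reverse) = sharedEdges P := by
  ext e
  simp [sharedEdges]

lemma sharedEdges_subset_edgeSet : sharedEdges P ⊆ G.edgeSet := by
  rintro e ⟨i, -, -, hei, -⟩
  exact (P i).edges_subset_edgeSet hei

lemma sharedEdges_finite_s8 : (sharedEdges P).Finite :=
  (Set.finite_iUnion fun i => (P i).edges.finite_toSet).subset
    fun _ ⟨i, _, _, hei, _⟩ => Set.mem_iUnion.2 ⟨i, hei⟩

lemma edgeSet_fromEdgeSet_sharedEdges :
    (fromEdgeSet (sharedEdges P)).edgeSet = sharedEdges P := by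
  rw [edgeSet_fromEdgeSet, sdiff_eq_left, Set.disjoint_left]
  exact fun _ he => G.not_isDiag_of_mem_edgeSet (sharedEdges_subset_edgeSet P he)

lemma exists_injective_darts_leaving {H : SimpleGraph V} (hshared : sharedEdges P ⊆ H.edgeSet)
    (C : H.ConnectedComponent) (hs : s ∈ C.supp) (ht : t ∉ C.supp) :
    ∃ d : Fin p → G.Dart, Function.Injective d ∧
      (∀ i, (d i).fst ∈ C.supp) ∧ ∀ i, (d i).snd ∉ C.supp := by
  choose d hd hfst hsnd using fun i => (P i).exists_boundary_dart C.supp hs ht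
  refine ⟨d, fun i j hij => ?_, hfst, hsnd⟩
  by_contra hne
  have hshare : (d i).edge ∈ sharedEdges P :=
    ⟨i, j, hne, List.mem_map_of_mem (hd i), hij ▸ List.mem_map_of_mem (hd j)⟩
  exact hsnd i
    ((ConnectedComponent.connectedComponentMk_eq_of_adj (hshared hshare)).symm.trans (hfst i))

end sharedEdges

theorem stmt8_general {V : Type*} (G : SimpleGraph V)
    (hfin : ∀ v, (G.neighborSet v).Finite) (hmax : ∀ v, degOf G v ≤ 4)
    (s t : V)
    (p : ℕ) (P : Fin p → G.Walk s t)
    (hsep : ¬ (SimpleGraph.fromEdgeSet (sharedEdges P)).Reachable s t) :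
    ceilHalfSub p (degOf G s) + ceilHalfSub p (degOf G t)
      ≤ (sharedEdges P).ncard := by
  set H := fromEdgeSet (sharedEdges P)
  have hH : H.edgeSet = sharedEdges P := edgeSet_fromEdgeSet_sharedEdges P
  have hHG : H ≤ G := edgeSet_subset_edgeSet.1 (hH ▸ sharedEdges_subset_edgeSet P)
  have hHfin : H.edgeSet.Finite := hH ▸ sharedEdges_finite_s8 P
  set Cs := H.connectedComponentMk s
  set Ct := H.connectedComponentMk t
  have hne : Cs ≠ Ct := fun h => hsep (ConnectedComponent.exact h)
  have := (Cs.finite_supp hHfin).fintype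
  have := (Ct.finite_supp hHfin).fintype
  obtain ⟨ds, hds, hds_fst, hds_snd⟩ :=
    exists_injective_darts_leaving P hH.ge Cs rfl fun h => hne h.symm
  obtain ⟨dt, hdt, hdt_fst, hdt_snd⟩ :=
    exists_injective_darts_leaving (fun i => (P i).reverse)
      ((sharedEdges_reverse P).trans hH.symm).le Ct rfl fun h => hne h
  have hs := Cs.card_add_two_mul_ncard_edgeSet_le hHG hfin hmax rfl ds hds hds_fst hds_snd
  have ht := Ct.card_add_two_mul_ncard_edgeSet_le hHG hfin hmax rfl dt hdt hdt_fst hdt_snd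
  have hE := Cs.ncard_edgeSet_toSubgraph_add_le hne hHfin
  rw [Fintype.card_fin] at hs ht
  rw [hH] at hE
  unfold ceilHalfSub
  omega

/-- If `G` has maximum degree at most `4` and the shared edge set `F` of a family
of `p` `s`-`t` paths does not connect `s` to `t`, then
`|F| ≥ ⌈(p - deg s)/2⌉ + ⌈(p - deg t)/2⌉`. -/
theorem stmt8 {V : Type*} (G : SimpleGraph V)
    (hfin : ∀ v, (G.neighborSet v).Finite) (hmax : ∀ v, degOf G v ≤ 4)
    (s t : V) (hst : s ≠ t)
    (p : ℕ) (P : Fin p → G.Walk s t) (hP : ∀ i, (P i).IsPath)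
    (hsep : ¬ (SimpleGraph.fromEdgeSet (sharedEdges P)).Reachable s t) :
    ceilHalfSub p (degOf G s) + ceilHalfSub p (degOf G t)
      ≤ (sharedEdges P).ncard :=
  stmt8_general G hfin hmax s t p P hsep
end

section
/- Let V be a type, let r : V → V → Prop be a binary relation (a directed graph), and let s ≠ t be elements of V. An r-path from s to t is a finite sequence of pairwise distinct vertices starting at s and ending at t in which consecutive vertices are related by r; its arcs are the consecutive pairs. Suppose P_1, …, P_p are r-paths from s to t and for some indices a ≠ b and vertices u, v the arc (u,v) lies on P_a and the arc (v,u) lies on P_b. Then there exist r-paths P'_1, …, P'_p from s to t such that every shared arc of the family (P'_i) is a shared arc of the family (P_i), every arc occurring in some P'_i occurs in some P_j, and the arcs (u,v) and (v,u) do not both occur among P'_1, …, P'_p. -/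
/-- The arcs (consecutive pairs of vertices) of a finite vertex sequence. -/
def arcs {V : Type*} (l : List V) : List (V × V) := l.zip l.tail

/-- `l` is an `r`-path from `s` to `t`: a finite sequence of pairwise distinct
vertices starting at `s`, ending at `t`, with consecutive vertices related by `r`. -/
def IsRPath {V : Type*} (r : V → V → Prop) (s t : V) (l : List V) : Prop :=
  l.Chain' r ∧ l.Nodup ∧ l.head? = some s ∧ l.getLast? = some t

/-- The set of shared arcs of a family of paths: arcs lying on two paths with
distinct indices. -/
def sharedArcs {V : Type*} {p : ℕ} (P : Fin p → List V) : Set (V × V) :=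
  {e | ∃ i j, i ≠ j ∧ e ∈ arcs (P i) ∧ e ∈ arcs (P j)}

/-!
Let `m(e)` count the paths of the family through the arc `e`. Shared arcs are those with
`m(e) ≥ 2` and used arcs those with `m(e) ≥ 1`, so it suffices to reroute the family without
increasing any `m(e)`. If `(u,v)` lies on `P_a = A₁ u v B₁` and `(v,u)` on `P_b = A₂ v u B₂`
(so `a ≠ b`, paths being simple), replace `P_a` and `P_b` by `s`-`t` paths inside the walks
`A₁ u B₂` and `A₂ v B₁`. The first avoids `v`, the second avoids `u`, and an arc on both of them
lies on both `P_a` and `P_b` because `A₁ u` and `v B₁` (and likewise `A₂ v` and `u B₂`) are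
vertex-disjoint. Hence no `m(e)` increases while `m(u,v)` drops by one; induct on `m(u,v)`.
-/

section Arcs

variable {V : Type*}

@[simp]
lemma arcs_cons_cons (x y : V) (l : List V) : arcs (x :: y :: l) = (x, y) :: arcs (y :: l) := rfl

lemma arcs_append_cons (A : List V) (x : V) (B : List V) :
    arcs (A ++ x :: B) = arcs (A ++ [x]) ++ arcs (x :: B) := by
  induction A with
  | nil => simp [arcs]
  | cons a A ih =>
    cases A with
    | nil => simp [arcs]
    | cons a' A => simpa using ih

lemma arcs_append_cons_cons (A : List V) (x y : V) (B : List V) :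
    arcs (A ++ x :: y :: B) = arcs (A ++ [x]) ++ (x, y) :: arcs (y :: B) := by
  rw [arcs_append_cons, arcs_cons_cons]

lemma mem_arcs_iff {x y : V} {l : List V} : (x, y) ∈ arcs l ↔ ∃ A B, l = A ++ x :: y :: B := by
  refine ⟨fun h => ?_, fun ⟨A, B, hl⟩ => by simp [hl, arcs_append_cons_cons]⟩
  induction l with
  | nil => simp [arcs] at h
  | cons a l ih =>
    cases l with
    | nil => simp [arcs] at h
    | cons b l =>
      rcases List.mem_cons.mp h with h | h
      · obtain ⟨rfl, rfl⟩ := Prod.mk.inj h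
        exact ⟨[], l, rfl⟩
      · obtain ⟨A, B, hl⟩ := ih h
        exact ⟨a :: A, B, by rw [hl]; rfl⟩

lemma mem_of_mem_arcs {e : V × V} {l : List V} (h : e ∈ arcs l) : e.1 ∈ l ∧ e.2 ∈ l :=
  have h := List.of_mem_zip h
  ⟨h.1, List.mem_of_mem_tail h.2⟩

lemma disjoint_arcs {L₁ L₂ : List V} (h : L₁.Disjoint L₂) : (arcs L₁).Disjoint (arcs L₂) :=
  fun _ h₁ h₂ => h (mem_of_mem_arcs h₁).1 (mem_of_mem_arcs h₂).1

lemma isChain_iff_forall_mem_arcs (r : V → V → Prop) (l : List V) :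
    l.IsChain r ↔ ∀ e ∈ arcs l, r e.1 e.2 := by
  simp only [List.isChain_iff_forall_rel_of_append_cons_cons, Prod.forall,
    mem_arcs_iff]
  grind

lemma head?_append_cons_congr (A : List V) (x : V) (B C : List V) :
    (A ++ x :: B).head? = (A ++ x :: C).head? := by
  cases A <;> rfl

lemma getLast?_append_cons_congr (A B : List V) (x : V) (C : List V) :
    (A ++ x :: C).getLast? = (B ++ x :: C).getLast? := by
  simp [List.getLast?_append, List.getLast?_cons]

lemma disjoint_of_nodup_append_cons_cons {A B : List V} {x y : V}
    (h : (A ++ x :: y :: B).Nodup) : (A ++ [x]).Disjoint (y :: B) := by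
  rw [show A ++ x :: y :: B = (A ++ [x]) ++ y :: B by simp] at h
  exact List.disjoint_of_nodup_append h

lemma swap_notMem_arcs_of_nodup {l : List V} (hl : l.Nodup) {u v : V} (h : (u, v) ∈ arcs l) :
    (v, u) ∉ arcs l := by
  obtain ⟨A, B, rfl⟩ := mem_arcs_iff.1 h
  have d := disjoint_of_nodup_append_cons_cons hl
  rw [arcs_append_cons_cons]
  intro h'
  rcases List.mem_append.1 h' with h' | h'
  · exact d (mem_of_mem_arcs h').1 List.mem_cons_self
  · rcases List.mem_cons.1 h' with h' | h'
    · exact d (List.mem_append_right _ (List.mem_singleton_self u))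
        ((Prod.mk.inj h').1 ▸ List.mem_cons_self)
    · exact d (List.mem_append_right _ (List.mem_singleton_self u)) (mem_of_mem_arcs h').2

end Arcs

section Walks

variable {V : Type*}

lemma arcs_subset_arcs_cons (a : V) (l : List V) : arcs l ⊆ arcs (a :: l) := by
  cases l <;> simp [arcs]

lemma exists_nodup_arcs_subset (l : List V) :
    ∃ m : List V, m.Nodup ∧ m.head? = l.head? ∧ m.getLast? = l.getLast? ∧ arcs m ⊆ arcs l := by
  induction l with
  | nil => exact ⟨[], List.nodup_nil, rfl, rfl, List.Subset.refl _⟩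
  | cons a l ih =>
    obtain ⟨m, hm, hhead, hlast, harcs⟩ := ih
    by_cases ha : a ∈ m
    · obtain ⟨A, B, rfl⟩ := List.append_of_mem ha
      refine ⟨a :: B, (List.nodup_append.1 hm).2.1, rfl, ?_, ?_⟩
      · simp [List.getLast?_cons, ← hlast, List.getLast?_append]
      · rw [arcs_append_cons] at harcs
        exact List.Subset.trans (List.Subset.trans (List.subset_append_right _ _) harcs)
          (arcs_subset_arcs_cons a l)
    · refine ⟨a :: m, List.nodup_cons.2 ⟨ha, hm⟩, rfl, by simp [List.getLast?_cons, hlast], ?_⟩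
      cases m with
      | nil => simp [arcs]
      | cons c m =>
        obtain ⟨l, rfl⟩ : ∃ l', l = c :: l' := by
          cases l <;> simp_all
        exact List.cons_subset_cons _ harcs

lemma exists_isRPath_arcs_subset {r : V → V → Prop} {s t : V} {l : List V}
    (hs : l.head? = some s) (ht : l.getLast? = some t) (hr : ∀ e ∈ arcs l, r e.1 e.2) :
    ∃ m, IsRPath r s t m ∧ arcs m ⊆ arcs l := by
  obtain ⟨m, hm, hhead, hlast, harcs⟩ := exists_nodup_arcs_subset l
  exact ⟨m, ⟨(isChain_iff_forall_mem_arcs r m).2 fun e he => hr e (harcs he), hm,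
    hhead.trans hs, hlast.trans ht⟩, harcs⟩

end Walks

lemma sum_apply_update_update_add {ι α M : Type*} [Fintype ι] [DecidableEq ι] [AddCommMonoid M]
    (g : α → M) (f : ι → α) {a b : ι} (hab : a ≠ b) (x y : α) :
    ∑ i, g (Function.update (Function.update f a x) b y i) + (g (f a) + g (f b)) =
      ∑ i, g (f i) + (g x + g y) := by
  have ha : a ∈ (Finset.univ : Finset ι) \ {b} := by simp [hab]
  simp only [Function.apply_update (fun _ => g), Finset.sum_update_of_mem (Finset.mem_univ b),
    Finset.sum_update_of_mem ha]
  rw [Finset.sum_eq_add_sum_sdiff_singleton_of_mem (Finset.mem_univ b),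
    Finset.sum_eq_add_sum_sdiff_singleton_of_mem ha]
  abel

section Multiplicity

variable {V ι : Type*} [DecidableEq V] [Fintype ι]

def arcMultiplicity (P : ι → List V) (e : V × V) : ℕ :=
  (Finset.univ.filter fun i => e ∈ arcs (P i)).card

lemma arcMultiplicity_pair_le {P₁ P₂ Q₁ Q₂ : List V}
    (h₁ : arcs Q₁ ⊆ arcs P₁ ++ arcs P₂) (h₂ : arcs Q₂ ⊆ arcs P₁ ++ arcs P₂)
    (h₁₂ : ∀ e ∈ arcs Q₁, e ∈ arcs Q₂ → e ∈ arcs P₁ ∧ e ∈ arcs P₂) (e : V × V) :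
    arcMultiplicity ![Q₁, Q₂] e ≤ arcMultiplicity ![P₁, P₂] e := by
  have h₁ : e ∈ arcs Q₁ → e ∈ arcs P₁ ∨ e ∈ arcs P₂ := fun h => List.mem_append.1 (h₁ h)
  have h₂ : e ∈ arcs Q₂ → e ∈ arcs P₁ ∨ e ∈ arcs P₂ := fun h => List.mem_append.1 (h₂ h)
  simp only [arcMultiplicity, Finset.card_filter, Fin.sum_univ_two, Matrix.cons_val_zero,
    Matrix.cons_val_one]
  split_ifs <;> grind

lemma arcMultiplicity_update_update [DecidableEq ι] (P : ι → List V) {a b : ι} (hab : a ≠ b)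
    (Q₁ Q₂ : List V) (e : V × V) :
    arcMultiplicity (Function.update (Function.update P a Q₁) b Q₂) e
        + arcMultiplicity ![P a, P b] e =
      arcMultiplicity P e + arcMultiplicity ![Q₁, Q₂] e := by
  simp only [arcMultiplicity, Finset.card_filter, Fin.sum_univ_two, Matrix.cons_val_zero,
    Matrix.cons_val_one]
  exact sum_apply_update_update_add (fun l => if e ∈ arcs l then 1 else 0) P hab Q₁ Q₂

lemma arcMultiplicity_pos_iff (P : ι → List V) (e : V × V) :
    0 < arcMultiplicity P e ↔ ∃ i, e ∈ arcs (P i) := by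
  simp [arcMultiplicity, Finset.card_pos, Finset.filter_nonempty_iff]

lemma one_lt_arcMultiplicity_iff {p : ℕ} (P : Fin p → List V) (e : V × V) :
    1 < arcMultiplicity P e ↔ e ∈ sharedArcs P := by
  simp only [arcMultiplicity, Finset.one_lt_card, Finset.mem_filter, Finset.mem_univ, true_and,
    sharedArcs, Set.mem_ofPred_eq]
  grind

end Multiplicity

section Rerouting

variable {V : Type*} {r : V → V → Prop} {s t : V}

lemma exists_isRPath_splice {A B C D : List V} {x : V}
    (h₁ : IsRPath r s t (A ++ x :: B)) (h₂ : IsRPath r s t (C ++ x :: D)) :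
    ∃ Q, IsRPath r s t Q ∧ arcs Q ⊆ arcs (A ++ [x]) ++ arcs (x :: D) := by
  have hr : ∀ e ∈ arcs (A ++ x :: D), r e.1 e.2 := by
    rw [arcs_append_cons]
    intro e he
    rcases List.mem_append.1 he with he | he
    · refine (isChain_iff_forall_mem_arcs r _).1 h₁.1 e ?_
      rw [arcs_append_cons]
      exact List.mem_append_left _ he
    · refine (isChain_iff_forall_mem_arcs r _).1 h₂.1 e ?_
      rw [arcs_append_cons]
      exact List.mem_append_right _ he
  obtain ⟨Q, hQ, hQarcs⟩ := exists_isRPath_arcs_subset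
    ((head?_append_cons_congr A x D B).trans h₁.2.2.1)
    ((getLast?_append_cons_congr A C x D).trans h₂.2.2.2) hr
  exact ⟨Q, hQ, by rwa [arcs_append_cons] at hQarcs⟩

variable [DecidableEq V]

lemma exists_uncross {P₁ P₂ : List V} {u v : V} (h₁ : IsRPath r s t P₁) (h₂ : IsRPath r s t P₂)
    (hu : (u, v) ∈ arcs P₁) (hv : (v, u) ∈ arcs P₂) :
    ∃ Q₁ Q₂, IsRPath r s t Q₁ ∧ IsRPath r s t Q₂ ∧ (u, v) ∉ arcs Q₁ ∧ (u, v) ∉ arcs Q₂ ∧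
      ∀ e, arcMultiplicity ![Q₁, Q₂] e ≤ arcMultiplicity ![P₁, P₂] e := by
  obtain ⟨A₁, B₁, rfl⟩ := mem_arcs_iff.1 hu
  obtain ⟨A₂, B₂, rfl⟩ := mem_arcs_iff.1 hv
  have d₁ := disjoint_of_nodup_append_cons_cons h₁.2.1
  have d₂ := disjoint_of_nodup_append_cons_cons h₂.2.1
  obtain ⟨Q₁, hQ₁, hQ₁arcs⟩ :=
    exists_isRPath_splice (C := A₂ ++ [v]) h₁ (by simpa using h₂)
  obtain ⟨Q₂, hQ₂, hQ₂arcs⟩ :=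
    exists_isRPath_splice (C := A₁ ++ [u]) h₂ (by simpa using h₁)
  refine ⟨Q₁, Q₂, hQ₁, hQ₂, fun h => ?_, fun h => ?_, arcMultiplicity_pair_le ?_ ?_ ?_⟩
  · rcases List.mem_append.1 (hQ₁arcs h) with h | h
    · exact d₁ (mem_of_mem_arcs h).2 List.mem_cons_self
    · exact d₂ (by simp) (mem_of_mem_arcs h).2
  · rcases List.mem_append.1 (hQ₂arcs h) with h | h
    · exact d₂ (mem_of_mem_arcs h).1 List.mem_cons_self
    · exact d₁ (by simp) (mem_of_mem_arcs h).1
  · intro e he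
    rcases List.mem_append.1 (hQ₁arcs he) with h | h
    · exact List.mem_append_left _ (by simp [arcs_append_cons_cons, h])
    · exact List.mem_append_right _ (by simp [arcs_append_cons_cons, h])
  · intro e he
    rcases List.mem_append.1 (hQ₂arcs he) with h | h
    · exact List.mem_append_right _ (by simp [arcs_append_cons_cons, h])
    · exact List.mem_append_left _ (by simp [arcs_append_cons_cons, h])
  · intro e he₁ he₂
    rcases List.mem_append.1 (hQ₁arcs he₁), List.mem_append.1 (hQ₂arcs he₂)
      with ⟨hfront₁ | hback₂, hfront₂ | hback₁⟩
    · simp [arcs_append_cons_cons, hfront₁, hfront₂]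
    · exact (disjoint_arcs d₁ hfront₁ hback₁).elim
    · exact (disjoint_arcs d₂ hfront₂ hback₂).elim
    · simp [arcs_append_cons_cons, hback₁, hback₂]

end Rerouting

section Family

variable {V ι : Type*} [DecidableEq V] [Fintype ι] [DecidableEq ι] {r : V → V → Prop} {s t : V}

lemma exists_reroute_decreasing {P : ι → List V} (hP : ∀ i, IsRPath r s t (P i)) {a b : ι}
    {u v : V}
    (hu : (u, v) ∈ arcs (P a)) (hv : (v, u) ∈ arcs (P b)) :
    ∃ P' : ι → List V, (∀ i, IsRPath r s t (P' i)) ∧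
      (∀ e, arcMultiplicity P' e ≤ arcMultiplicity P e) ∧
      arcMultiplicity P' (u, v) < arcMultiplicity P (u, v) := by
  have hab : a ≠ b := by
    rintro rfl
    exact swap_notMem_arcs_of_nodup (hP a).2.1 hu hv
  obtain ⟨Q₁, Q₂, hQ₁, hQ₂, huv₁, huv₂, hle⟩ := exists_uncross (hP a) (hP b) hu hv
  have hcount := arcMultiplicity_update_update P hab Q₁ Q₂
  refine ⟨Function.update (Function.update P a Q₁) b Q₂, fun i => ?_, fun e => ?_, ?_⟩
  · simp only [Function.update_apply]
    split_ifs
    exacts [hQ₂, hQ₁, hP i]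
  · have := hcount e
    have := hle e
    omega
  · have hQ : ¬ 0 < arcMultiplicity ![Q₁, Q₂] (u, v) := by
      simp [arcMultiplicity_pos_iff, Fin.exists_fin_two, huv₁, huv₂]
    have hP : 0 < arcMultiplicity ![P a, P b] (u, v) :=
      (arcMultiplicity_pos_iff _ _).2 ⟨0, hu⟩
    have := hcount (u, v)
    omega

lemma exists_reroute_not_antiparallel (P : ι → List V) (hP : ∀ i, IsRPath r s t (P i))
    (u v : V) :
    ∃ P' : ι → List V, (∀ i, IsRPath r s t (P' i)) ∧
      (∀ e, arcMultiplicity P' e ≤ arcMultiplicity P e) ∧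
      ¬ (0 < arcMultiplicity P' (u, v) ∧ 0 < arcMultiplicity P' (v, u)) := by
  induction hn : arcMultiplicity P (u, v) using Nat.strong_induction_on generalizing P with
  | _ n ih =>
  by_cases hboth : 0 < arcMultiplicity P (u, v) ∧ 0 < arcMultiplicity P (v, u)
  · obtain ⟨⟨a, hu⟩, ⟨b, hv⟩⟩ := hboth.imp (arcMultiplicity_pos_iff P _).1
      (arcMultiplicity_pos_iff P _).1
    obtain ⟨P₁, hP₁, hle₁, hlt₁⟩ := exists_reroute_decreasing hP hu hv
    obtain ⟨P', hP', hle', hnot⟩ := ih _ (hn ▸ hlt₁) P₁ hP₁ rfl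
    exact ⟨P', hP', fun e => (hle' e).trans (hle₁ e), hnot⟩
  · exact ⟨P, hP, fun _ => le_rfl, hboth⟩

end Family

theorem stmt11_general {V : Type*} (r : V → V → Prop) (s t : V)
    (p : ℕ) (P : Fin p → List V) (hP : ∀ i, IsRPath r s t (P i))
    (u v : V) :
    ∃ P' : Fin p → List V,
      (∀ i, IsRPath r s t (P' i)) ∧
      (∀ e, e ∈ sharedArcs P' → e ∈ sharedArcs P) ∧
      (∀ e, ∀ i, e ∈ arcs (P' i) → ∃ j, e ∈ arcs (P j)) ∧
      ¬ ((∃ i, (u, v) ∈ arcs (P' i)) ∧ (∃ i, (v, u) ∈ arcs (P' i))) := by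
  classical
  obtain ⟨P', hP', hle, hnot⟩ := exists_reroute_not_antiparallel P hP u v
  refine ⟨P', hP', fun e he => ?_, fun e i he => ?_, fun h => hnot ?_⟩
  · rw [← one_lt_arcMultiplicity_iff] at he ⊢
    exact he.trans_le (hle e)
  · exact (arcMultiplicity_pos_iff P e).1
      (((arcMultiplicity_pos_iff P' e).2 ⟨i, he⟩).trans_le (hle e))
  · exact h.imp (arcMultiplicity_pos_iff P' _).2 (arcMultiplicity_pos_iff P' _).2

/-- If a family of `r`-paths from `s` to `t` uses an arc `(u,v)` on one path and
its reverse `(v,u)` on another, then the family can be rerouted so that no new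
shared arcs and no new arcs appear, and `(u,v)`, `(v,u)` are not both used. -/
theorem stmt11 {V : Type*} (r : V → V → Prop) (s t : V) (hst : s ≠ t)
    (p : ℕ) (P : Fin p → List V) (hP : ∀ i, IsRPath r s t (P i))
    (a b : Fin p) (hab : a ≠ b) (u v : V)
    (hu : (u, v) ∈ arcs (P a)) (hv : (v, u) ∈ arcs (P b)) :
    ∃ P' : Fin p → List V,
      (∀ i, IsRPath r s t (P' i)) ∧
      (∀ e, e ∈ sharedArcs P' → e ∈ sharedArcs P) ∧
      (∀ e, ∀ i, e ∈ arcs (P' i) → ∃ j, e ∈ arcs (P j)) ∧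
      ¬ ((∃ i, (u, v) ∈ arcs (P' i)) ∧ (∃ i, (v, u) ∈ arcs (P' i))) :=
  stmt11_general r s t p P hP u v
end

section
/- Let G be a simple graph, let s ≠ t be vertices of G, and let p, k ∈ ℕ. Let D(G) be the directed graph on the vertices of G in which (u,v) is an arc if and only if {u,v} is an edge of G (each edge replaced by two anti-parallel arcs). Then there exists a family of p s-t paths in G with at most k shared edges if and only if there exists a family of p directed s-t paths in D(G) with at most k shared arcs. -/
section SharedElems

variable {ι α β : Type*}

def sharedElems (M : ι → List α) : Set α :=
  {a | ∃ i j, i ≠ j ∧ a ∈ M i ∧ a ∈ M j}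

theorem sharedElems_finite [Finite ι] (M : ι → List α) : (sharedElems M).Finite :=
  (Set.finite_iUnion fun i => (M i).finite_toSet).subset
    fun _ ⟨i, _, _, hi, _⟩ => Set.mem_iUnion.2 ⟨i, hi⟩

theorem ncard_sharedElems_map_of_injOn (f : α → β) (M : ι → List α)
    (hf : Set.InjOn f {a | ∃ i, a ∈ M i}) :
    (sharedElems fun i => (M i).map f).ncard = (sharedElems M).ncard := by
  have hmap : (sharedElems fun i => (M i).map f) = f '' sharedElems M := by
    ext b
    constructor
    · rintro ⟨i, j, hij, hi, hj⟩
      obtain ⟨a, ha, rfl⟩ := List.mem_map.1 hi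
      obtain ⟨a', ha', hfa⟩ := List.mem_map.1 hj
      exact ⟨a', ⟨i, j, hij, hf ⟨j, ha'⟩ ⟨i, ha⟩ hfa ▸ ha, ha'⟩, hfa⟩
    · rintro ⟨a, ⟨i, j, hij, hi, hj⟩, rfl⟩
      exact ⟨i, j, hij, List.mem_map_of_mem hi, List.mem_map_of_mem hj⟩
  have hsub : sharedElems M ⊆ {a | ∃ i, a ∈ M i} := fun _ ⟨i, _, _, hi, _⟩ => ⟨i, hi⟩
  rw [hmap, (hf.mono hsub).ncard_image]

/-- An element shared by the two new lists but by no two old ones would lie in `A` and `B`, or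
in `C` and `D`. -/
theorem sharedElems_subset_of_exchange {M M' : ι → List α} {i j : ι} (hij : i ≠ j)
    {A B C D : List α} {a b : α} (hi : M i = A ++ a :: B) (hj : M j = C ++ b :: D)
    (hni : (M i).Nodup) (hnj : (M j).Nodup) (h'i : M' i ⊆ A ++ D) (h'j : M' j ⊆ C ++ B)
    (h' : ∀ x, x ≠ i → x ≠ j → M' x = M x) :
    sharedElems M' ⊆ sharedElems M := by
  rintro e ⟨x, y, hxy, hx, hy⟩
  rw [hi, List.nodup_append] at hni
  rw [hj, List.nodup_append] at hnj
  by_contra hne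
  simp only [sharedElems, Set.mem_ofPred_eq, not_exists, not_and] at hne
  by_cases hxi : x = i <;> by_cases hxj : x = j <;> by_cases hyi : y = i <;>
    by_cases hyj : y = j <;> grind

end SharedElems

theorem Fintype.sum_lt_sum_of_eq_off_pair {ι M : Type*} [Fintype ι] [DecidableEq ι]
    [AddCommMonoid M] [PartialOrder M] [IsOrderedCancelAddMonoid M] {f g : ι → M} {i j : ι}
    (hij : i ≠ j) (hfg : ∀ x, x ≠ i → x ≠ j → f x = g x) (h : f i + f j < g i + g j) :
    ∑ x, f x < ∑ x, g x := by
  have hcompl : ∑ x ∈ {i, j}ᶜ, f x = ∑ x ∈ {i, j}ᶜ, g x :=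
    Finset.sum_congr rfl fun x hx => hfg x (by rintro rfl; simp at hx) (by rintro rfl; simp at hx)
  rw [← Finset.sum_compl_add_sum {i, j}, ← Finset.sum_compl_add_sum {i, j}, hcompl,
    Finset.sum_pair hij, Finset.sum_pair hij]
  exact add_lt_add_right h _

namespace SimpleGraph

variable {V : Type*} {G : SimpleGraph V}

namespace Walk

theorem arcs_support {u v : V} (w : G.Walk u v) : arcs w.support = w.darts.map Dart.toProd := by
  induction w with
  | nil => rfl
  | cons h w ih =>
    rw [darts_cons, List.map_cons, ← ih, support_cons, ← w.cons_tail_support]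
    rfl

theorem exists_eq_append_cons_of_mem_darts {u v : V} {w : G.Walk u v} {d : G.Dart}
    (hd : d ∈ w.darts) :
    ∃ (A : G.Walk u d.fst) (B : G.Walk d.snd v), w = A.append (cons d.adj B) := by
  induction w with
  | nil => cases hd
  | cons h w ih =>
    rcases List.mem_cons.1 hd with rfl | hd
    · exact ⟨nil, w, rfl⟩
    · obtain ⟨A, B, rfl⟩ := ih hd
      exact ⟨cons h A, B, rfl⟩

theorem IsTrail.symm_notMem_darts {u v : V} {w : G.Walk u v} (hw : w.IsTrail) {d : G.Dart}
    (hd : d ∈ w.darts) : d.symm ∉ w.darts := fun hs =>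
  d.symm_ne (List.inj_on_of_nodup_map hw.edges_nodup hs hd d.edge_symm)

theorem IsPath.isRPath_support {u v : V} {w : G.Walk u v} (hw : w.IsPath) :
    IsRPath G.Adj u v w.support :=
  ⟨w.isChain_adj_support, hw.support_nodup, by rw [← w.cons_tail_support]; rfl,
    by rw [List.getLast?_eq_some_getLast w.support_ne_nil, getLast_support]⟩

end Walk

theorem exists_isPath_support_eq_of_isRPath {s t : V} {l : List V} (hl : IsRPath G.Adj s t l) :
    ∃ w : G.Walk s t, w.IsPath ∧ w.support = l := by
  obtain ⟨hchain, hnodup, hhead, hlast⟩ := hl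
  replace hchain : l.IsChain G.Adj := hchain
  have hne : l ≠ [] := by rintro rfl; cases hhead
  have hs : l.head hne = s := Option.some_inj.1 (List.head?_eq_some_head hne ▸ hhead)
  have ht : l.getLast hne = t := Option.some_inj.1 (List.getLast?_eq_some_getLast hne ▸ hlast)
  have hsupp : ((Walk.ofSupport l hne hchain).copy hs ht).support = l := by
    rw [Walk.support_copy, Walk.support_ofSupport]
  exact ⟨_, (Walk.isPath_def _).2 (by rw [hsupp]; exact hnodup), hsupp⟩

section Families

variable {ι : Type*} {s t : V}

/-- No edge is traversed in both directions by the walks of the family. -/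
def IsConsistentlyOriented (P : ι → G.Walk s t) : Prop :=
  Set.InjOn Dart.edge {d | ∃ i, d ∈ (P i).darts}

theorem exists_opposite_darts_of_not_isConsistentlyOriented {P : ι → G.Walk s t}
    (hP : ∀ i, (P i).IsTrail) (h : ¬IsConsistentlyOriented P) :
    ∃ i j, i ≠ j ∧ ∃ d ∈ (P i).darts, d.symm ∈ (P j).darts := by
  simp only [IsConsistentlyOriented, Set.InjOn, not_forall] at h
  obtain ⟨d, ⟨i, hi⟩, d', ⟨j, hj⟩, hedge, hne⟩ := h
  obtain rfl : d = d'.symm := ((dart_edge_eq_iff d d').1 hedge).resolve_left hne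
  refine ⟨j, i, fun hji => ?_, d', hj, hi⟩
  subst hji
  exact (hP j).symm_notMem_darts hj hi

theorem IsConsistentlyOriented.ncard_sharedElems_edges {P : ι → G.Walk s t}
    (hP : IsConsistentlyOriented P) :
    (sharedElems fun i => (P i).edges).ncard = (sharedElems fun i => (P i).darts).ncard :=
  ncard_sharedElems_map_of_injOn Dart.edge _ hP

/-- Rerouting two paths that cross an edge in opposite directions: `A (u,v) B` and `C (v,u) D`
become `A D` and `C B`, made into paths by `bypass`. -/
theorem exists_reroute_of_opposite_darts [Fintype ι] {P : ι → G.Walk s t}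
    (hP : ∀ i, (P i).IsPath) {i j : ι} (hij : i ≠ j) {d : G.Dart} (hi : d ∈ (P i).darts)
    (hj : d.symm ∈ (P j).darts) :
    ∃ P' : ι → G.Walk s t, (∀ x, (P' x).IsPath) ∧
      ∑ x, (P' x).length < ∑ x, (P x).length ∧
      (sharedElems fun x => (P' x).edges) ⊆ (sharedElems fun x => (P x).edges) ∧
      (sharedElems fun x => (P' x).darts) ⊆ sharedElems fun x => (P x).darts := by
  classical
  obtain ⟨A, B, hPi⟩ := Walk.exists_eq_append_cons_of_mem_darts hi
  obtain ⟨C, D, hPj⟩ := Walk.exists_eq_append_cons_of_mem_darts hj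
  set P' := Function.update (Function.update P i (A.append D).bypass) j (C.append B).bypass
  have hP'i : P' i = (A.append D).bypass := by simp [P', hij]
  have hP'j : P' j = (C.append B).bypass := by simp [P']
  have hP' : ∀ x, x ≠ i → x ≠ j → P' x = P x := fun x hxi hxj => by simp [P', hxi, hxj]
  refine ⟨P', fun x => ?_, ?_, ?_, ?_⟩
  · by_cases hxj : x = j
    · rw [hxj, hP'j]; exact Walk.bypass_isPath _
    by_cases hxi : x = i
    · rw [hxi, hP'i]; exact Walk.bypass_isPath _
    · rw [hP' x hxi hxj]; exact hP x
  · refine Fintype.sum_lt_sum_of_eq_off_pair hij (fun x hxi hxj => by rw [hP' x hxi hxj]) ?_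
    have h₁ : (A.append D).bypass.length ≤ A.length + D.length :=
      (A.append D).length_bypass_le_length.trans (Walk.length_append _ _).le
    have h₂ : (C.append B).bypass.length ≤ C.length + B.length :=
      (C.append B).length_bypass_le_length.trans (Walk.length_append _ _).le
    rw [hP'i, hP'j, hPi, hPj, Walk.length_append, Walk.length_append, Walk.length_cons,
      Walk.length_cons]
    omega
  · refine sharedElems_subset_of_exchange hij (by rw [hPi, Walk.edges_append, Walk.edges_cons])
      (by rw [hPj, Walk.edges_append, Walk.edges_cons]) (hP i).isTrail.edges_nodup
      (hP j).isTrail.edges_nodup ?_ ?_ fun x hxi hxj => by rw [hP' x hxi hxj]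
    · rw [hP'i]; exact Walk.edges_append _ _ ▸ Walk.edges_bypass_subset_edges _
    · rw [hP'j]; exact Walk.edges_append _ _ ▸ Walk.edges_bypass_subset_edges _
  · refine sharedElems_subset_of_exchange hij (by rw [hPi, Walk.darts_append, Walk.darts_cons])
      (by rw [hPj, Walk.darts_append, Walk.darts_cons])
      (Walk.darts_nodup_of_support_nodup (hP i).support_nodup)
      (Walk.darts_nodup_of_support_nodup (hP j).support_nodup) ?_ ?_
      fun x hxi hxj => by rw [hP' x hxi hxj]
    · rw [hP'i]; exact Walk.darts_append _ _ ▸ Walk.darts_bypass_subset_darts _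
    · rw [hP'j]; exact Walk.darts_append _ _ ▸ Walk.darts_bypass_subset_darts _

theorem exists_isConsistentlyOriented [Fintype ι] (P : ι → G.Walk s t)
    (hP : ∀ i, (P i).IsPath) :
    ∃ P' : ι → G.Walk s t, (∀ i, (P' i).IsPath) ∧ IsConsistentlyOriented P' ∧
      (sharedElems fun i => (P' i).edges) ⊆ (sharedElems fun i => (P i).edges) ∧
      (sharedElems fun i => (P' i).darts) ⊆ sharedElems fun i => (P i).darts := by
  induction h : ∑ i, (P i).length using Nat.strong_induction_on generalizing P with
  | _ n ih =>
    by_cases hc : IsConsistentlyOriented P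
    · exact ⟨P, hP, hc, subset_rfl, subset_rfl⟩
    obtain ⟨i, j, hij, d, hi, hj⟩ :=
      exists_opposite_darts_of_not_isConsistentlyOriented (fun i => (hP i).isTrail) hc
    obtain ⟨Q, hQ, hlt, hE, hD⟩ := exists_reroute_of_opposite_darts hP hij hi hj
    obtain ⟨P', hP', hc', hE', hD'⟩ := ih _ (h ▸ hlt) Q hQ rfl
    exact ⟨P', hP', hc', hE'.trans hE, hD'.trans hD⟩

end Families

theorem ncard_sharedArcs_support {s t : V} {p : ℕ} (P : Fin p → G.Walk s t) :
    (sharedArcs fun i => (P i).support).ncard = (sharedElems fun i => (P i).darts).ncard := by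
  change (sharedElems fun i => arcs (P i).support).ncard = _
  simp only [Walk.arcs_support]
  exact ncard_sharedElems_map_of_injOn _ _ Dart.toProd_injective.injOn

end SimpleGraph

theorem stmt12_general {V : Type*} (G : SimpleGraph V) (s t : V) (p k : ℕ) :
    (∃ P : Fin p → G.Walk s t,
      (∀ i, (P i).IsPath) ∧ (sharedEdges P).ncard ≤ k) ↔
    (∃ Q : Fin p → List V,
      (∀ i, IsRPath G.Adj s t (Q i)) ∧ (sharedArcs Q).ncard ≤ k) := by
  constructor
  · rintro ⟨P, hP, hk⟩
    obtain ⟨P', hP', hc, hE, -⟩ := SimpleGraph.exists_isConsistentlyOriented P hP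
    refine ⟨fun i => (P' i).support, fun i => (hP' i).isRPath_support, ?_⟩
    rw [SimpleGraph.ncard_sharedArcs_support, ← hc.ncard_sharedElems_edges]
    exact (Set.ncard_le_ncard hE (sharedElems_finite _)).trans hk
  · rintro ⟨Q, hQ, hk⟩
    choose P hP hPQ using fun i => SimpleGraph.exists_isPath_support_eq_of_isRPath (hQ i)
    obtain ⟨P', hP', hc, -, hD⟩ := SimpleGraph.exists_isConsistentlyOriented P hP
    refine ⟨P', hP', ?_⟩
    obtain rfl : Q = fun i => (P i).support := funext fun i => (hPQ i).symm
    calc (sharedEdges P').ncard = (sharedElems fun i => (P' i).darts).ncard :=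
          hc.ncard_sharedElems_edges
      _ ≤ (sharedElems fun i => (P i).darts).ncard :=
          Set.ncard_le_ncard hD (sharedElems_finite _)
      _ = (sharedArcs fun i => (P i).support).ncard := (SimpleGraph.ncard_sharedArcs_support P).symm
      _ ≤ k := hk

/-- There are `p` `s`-`t` paths in `G` with at most `k` shared edges iff there are
`p` directed `s`-`t` paths in the bidirected graph `D(G)` (whose arc relation is
`G.Adj`) with at most `k` shared arcs. -/
theorem stmt12 {V : Type*} (G : SimpleGraph V) (s t : V) (hst : s ≠ t) (p k : ℕ) :
    (∃ P : Fin p → G.Walk s t,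
      (∀ i, (P i).IsPath) ∧ (sharedEdges P).ncard ≤ k) ↔
    (∃ Q : Fin p → List V,
      (∀ i, IsRPath G.Adj s t (Q i)) ∧ (sharedArcs Q).ncard ≤ k) :=
  stmt12_general G s t p k
end
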